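/- arXiv:2112.11634 — 3 statements merged into one kernel-verified Lean document; each statement's English description precedes it below -/
import Mathlib

section
/- Lloyd's 15-puzzle is unsolvable: there is no sequence of elementary moves transforming the configuration with tiles 14 and 15 swapped (blank in the bottom-right corner) into the identity configuration. -/
/-- Two cells of the 4×4 grid are adjacent: differ by one in exactly one coordinate. -/
def Adj (b b' : Fin 4 × Fin 4) : Prop :=
  (b.1 = b'.1 ∧ (b.2.val = b'.2.val + 1 ∨ b'.2.val = b.2.val + 1)) ∨
  (b.2 = b'.2 ∧ (b.1.val = b'.1.val + 1 ∨ b'.1.val = b.1.val + 1))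

/-- Linear index of a cell in `Fin 16`. -/
def pos (b : Fin 4 × Fin 4) : Fin 16 :=
  ⟨b.1.val * 4 + b.2.val, by have := b.1.isLt; have := b.2.isLt; omega⟩

/-- One elementary move: the blank swaps with an adjacent tile. -/
def Move (s t : Equiv.Perm (Fin 16) × (Fin 4 × Fin 4)) : Prop :=
  Adj s.2 t.2 ∧ t.1 = Equiv.swap (pos s.2) (pos t.2) * s.1

/-- Reachability: reflexive-transitive closure of elementary moves. -/
def Reachable : (Equiv.Perm (Fin 16) × (Fin 4 × Fin 4)) →
    (Equiv.Perm (Fin 16) × (Fin 4 × Fin 4)) → Prop :=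
  Relation.ReflTransGen Move

/-! Moving the blank to an adjacent cell flips the colour of its cell in the checkerboard colouring
and multiplies the tile permutation by a transposition, so the product of the two signs is invariant.
It is `-1` for the swapped configuration and `1` for the solved one. -/

def cellParity (b : Fin 4 × Fin 4) : ℤˣ :=
  (-1) ^ (b.1.val + b.2.val)

def puzzleInvariant (s : Equiv.Perm (Fin 16) × (Fin 4 × Fin 4)) : ℤˣ :=
  Equiv.Perm.sign s.1 * cellParity s.2

theorem pos_injective : Function.Injective pos := by
  rintro ⟨⟨i, hi⟩, ⟨j, hj⟩⟩ ⟨⟨i', hi'⟩, ⟨j', hj'⟩⟩ h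
  simp only [pos, Fin.mk.injEq] at h
  ext <;> simp only <;> omega

theorem Adj.ne {b b' : Fin 4 × Fin 4} (h : Adj b b') : b ≠ b' := by
  rintro rfl
  rcases h with ⟨-, h⟩ | ⟨-, h⟩ <;> omega

theorem Adj.cellParity_eq_neg {b b' : Fin 4 × Fin 4} (h : Adj b b') :
    cellParity b' = -cellParity b := by
  have hsum : b.1.val + b.2.val = b'.1.val + b'.2.val + 1 ∨
      b'.1.val + b'.2.val = b.1.val + b.2.val + 1 := by
    rcases h with ⟨h₁, h₂⟩ | ⟨h₁, h₂⟩ <;> rw [h₁] <;> omega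
  unfold cellParity
  rcases hsum with h | h <;> rw [h, pow_succ] <;> simp

theorem Move.puzzleInvariant_eq {s t : Equiv.Perm (Fin 16) × (Fin 4 × Fin 4)} (h : Move s t) :
    puzzleInvariant t = puzzleInvariant s := by
  obtain ⟨hadj, hperm⟩ := h
  have hswap := Equiv.Perm.sign_swap (pos_injective.ne hadj.ne)
  rw [puzzleInvariant, puzzleInvariant, hperm, map_mul, hswap, hadj.cellParity_eq_neg]
  simp

theorem Reachable.puzzleInvariant_eq {s t : Equiv.Perm (Fin 16) × (Fin 4 × Fin 4)}
    (h : Reachable s t) : puzzleInvariant t = puzzleInvariant s := by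
  induction h with
  | refl => rfl
  | tail _ hmove ih => rw [hmove.puzzleInvariant_eq, ih]

/-- Lloyd's 15-puzzle is unsolvable: the configuration with tiles 14 and 15 swapped
(indices 13 and 14) and the blank at the bottom-right corner cannot reach the solved state. -/
theorem lloyd_unsolvable :
    ¬ Reachable (Equiv.swap (13 : Fin 16) 14, ((3 : Fin 4), (3 : Fin 4)))
      (1, ((3 : Fin 4), (3 : Fin 4))) := by
  intro h
  have hinv := h.puzzleInvariant_eq
  simp [puzzleInvariant, cellParity, Equiv.Perm.sign_swap (by decide : (13 : Fin 16) ≠ 14)] at hinv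
end

section
/- The quantity sign(σ) · (−1)^(i+j), where σ is the tile configuration and (i,j) is the blank's cell, is invariant under every elementary move of the 15-puzzle. -/
/-! A move multiplies the configuration by the transposition of two distinct cells, flipping its
sign, and moves the blank to a cell of the opposite colour of the checkerboard, flipping
`(-1) ^ (i + j)`; the two flips cancel. -/

theorem neg_one_pow_eq_neg_of_odd_add {R : Type*} [Monoid R] [HasDistribNeg R] {m n : ℕ}
    (h : Odd (m + n)) : (-1 : R) ^ m = -(-1) ^ n :=
  calc (-1 : R) ^ m = (-1) ^ (m + n) * (-1) ^ n := by
        rw [pow_add, mul_assoc, ← pow_add, Even.neg_one_pow ⟨n, rfl⟩, mul_one]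
    _ = -(-1) ^ n := by rw [h.neg_one_pow, neg_one_mul]

theorem pos_eq_finProdFinEquiv (b : Fin 4 × Fin 4) : pos b = finProdFinEquiv b := by
  ext
  simp only [pos, finProdFinEquiv, Equiv.coe_fn_mk]
  ring

theorem Adj.odd_add {b b' : Fin 4 × Fin 4} (h : Adj b b') :
    Odd (b'.1.val + b'.2.val + (b.1.val + b.2.val)) := by
  rw [Nat.odd_iff]
  rcases h with ⟨h1, h2⟩ | ⟨h1, h2⟩ <;> rw [Fin.ext_iff] at h1 <;> omega

/-- The quantity sign(σ)·(−1)^(i+j) is invariant under every elementary move. -/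
theorem invariant_under_move (s t : Equiv.Perm (Fin 16) × (Fin 4 × Fin 4)) (h : Move s t) :
    Equiv.Perm.sign t.1 * (-1 : ℤˣ) ^ (t.2.1.val + t.2.2.val) =
      Equiv.Perm.sign s.1 * (-1 : ℤˣ) ^ (s.2.1.val + s.2.2.val) := by
  obtain ⟨hadj, ht⟩ := h
  rw [ht, map_mul, Equiv.Perm.sign_swap (pos_injective.ne hadj.ne),
    neg_one_pow_eq_neg_of_odd_add hadj.odd_add, neg_one_mul, mul_neg, neg_mul, neg_neg]
end

section
/- The set of permutations of the 15 tiles achievable by move sequences that return the blank to its original corner forms a subgroup of S₁₅ contained in the alternating group A₁₅. -/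
/-!
A move multiplies the arrangement on the left by a transposition, so reachability is an
equivalence relation that commutes with multiplication on the right; hence the arrangements
reachable from the identity with the blank back at its starting cell form a subgroup. Each move
also changes the sign of the arrangement and moves the blank to a cell of the other colour of
the checkerboard, so the product of the sign with the colour is invariant, and every arrangement
in that subgroup is even.
-/

open Equiv Equiv.Perm Relation

lemma Adj.symm {b b' : Fin 4 × Fin 4} (h : Adj b b') : Adj b' b := by
  simp only [Adj, Fin.ext_iff] at *
  omega

lemma Adj.pos_ne {b b' : Fin 4 × Fin 4} (h : Adj b b') : pos b ≠ pos b' := by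
  simp only [Adj, Fin.ext_iff] at h
  simp only [pos, ne_eq, Fin.ext_iff]
  omega

instance : Std.Symm Move where
  symm _ _ h := ⟨h.1.symm, by rw [h.2, swap_comm, ← mul_assoc, swap_mul_self, one_mul]⟩

lemma Reachable.symm {s t : Perm (Fin 16) × (Fin 4 × Fin 4)} (h : Reachable s t) :
    Reachable t s :=
  Std.Symm.symm (r := ReflTransGen Move) s t h

lemma Reachable.mul_right {s t : Perm (Fin 16) × (Fin 4 × Fin 4)} (g : Perm (Fin 16))
    (h : Reachable s t) : Reachable (s.1 * g, s.2) (t.1 * g, t.2) :=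
  ReflTransGen.lift (r := Move) (p := Move) (fun u ↦ (u.1 * g, u.2))
    (fun _ _ hm ↦ ⟨hm.1, by simp only [hm.2, mul_assoc]⟩) _ _ h

def cellSign (b : Fin 4 × Fin 4) : ℤˣ := (-1) ^ (b.1.val + b.2.val)

lemma Adj.cellSign_eq_neg {b b' : Fin 4 × Fin 4} (h : Adj b b') :
    cellSign b' = -cellSign b := by
  have hsum : b'.1.val + b'.2.val = b.1.val + b.2.val + 1 ∨
      b.1.val + b.2.val = b'.1.val + b'.2.val + 1 := by
    simp only [Adj, Fin.ext_iff] at h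
    omega
  rcases hsum with hsum | hsum <;> simp [cellSign, hsum, pow_succ]

lemma Reachable.sign_mul_cellSign_eq {s t : Perm (Fin 16) × (Fin 4 × Fin 4)}
    (h : Reachable s t) : sign t.1 * cellSign t.2 = sign s.1 * cellSign s.2 := by
  induction h with
  | refl => rfl
  | tail _ hm ih =>
    rw [← ih, hm.2, hm.1.cellSign_eq_neg, Perm.sign_mul, sign_swap hm.1.pos_ne]
    simp

def loopGroup (c : Fin 4 × Fin 4) : Subgroup (Perm (Fin 16)) where
  carrier := {g | Reachable (1, c) (g, c)}
  one_mem' := ReflTransGen.refl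
  mul_mem' {a b} ha hb := by
    have hab : Reachable (b, c) (a * b, c) := by simpa using ha.mul_right b
    exact hb.trans hab
  inv_mem' {a} ha := by simpa using ha.symm.mul_right a⁻¹

lemma loopGroup_le_alternatingGroup (c : Fin 4 × Fin 4) :
    loopGroup c ≤ alternatingGroup (Fin 16) := fun g hg ↦ by
  simpa using hg.sign_mul_cellSign_eq

lemma sign_viaEmbedding {α β : Type*} [Fintype α] [DecidableEq α] [Fintype β] [DecidableEq β]
    (e : Perm α) (ι : α ↪ β) : sign (e.viaEmbedding ι) = sign e := by
  rw [viaEmbedding, sign_extendDomain]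

/-- Permutations of the 15 tiles achievable with the blank returning to the corner form a
subgroup of S₁₅ contained in the alternating group A₁₅. -/
theorem corner_loop_perms_subgroup :
    ∃ H : Subgroup (Equiv.Perm (Fin 15)),
      (H : Set (Equiv.Perm (Fin 15))) =
        {τ | Reachable (1, ((3 : Fin 4), (3 : Fin 4)))
          (τ.viaEmbedding (Fin.castLEEmb (by omega)), ((3 : Fin 4), (3 : Fin 4)))} ∧
      H ≤ alternatingGroup (Fin 15) := by
  set ι : Fin 15 ↪ Fin 16 := Fin.castLEEmb (by omega)
  refine ⟨(loopGroup (3, 3)).comap (viaEmbeddingHom ι), rfl, fun τ hτ ↦ ?_⟩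
  rw [mem_alternatingGroup, ← sign_viaEmbedding τ ι]
  exact loopGroup_le_alternatingGroup (3, 3) hτ
end
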